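/- Let A be a nonzero symmetric n×n matrix with G = {U ∈ GL(n,R) : U^T A U = A}, and let f : R^n \ {x : x^T A x = 0} → R^m be G-equivariant for some linear action of G on R^m. Then there exist functions φ_s into G and φ_n : R → R^m such that f(x) = φ_s(x/‖x‖_A) · φ_n(‖x‖_A), where ‖x‖_A = sign(x^T A x)·√|x^T A x|, φ_s is invariant under positive scalar rescaling of its argument's preimage, and φ_n depends only on the orbit invariant. -/

import Mathlib

open Matrix

/-- The pseudo-norm associated with the quadratic form of `A`:
`‖x‖_A = sign(xᵀ A x) √|xᵀ A x|`. -/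
noncomputable def normA {n : ℕ} (A : Matrix (Fin n) (Fin n) ℝ) (x : Fin n → ℝ) : ℝ :=
  Real.sign (x ⬝ᵥ A.mulVec x) * Real.sqrt |x ⬝ᵥ A.mulVec x|

/-!
For `q(x) = xᵀ A x`, the isometry group of `A` acts transitively on every level set
`{q = c}` with `c ≠ 0`: when `q u = q v`, the `A`-reflection along `u - v` sends `v` to `u`,
and if `u - v` is isotropic then `-u - v` is not (parallelogram law), so two reflections do.
A vector `x` off the null cone is `‖x‖_A • u` with `‖u‖_A = sign ‖x‖_A ∈ {±1}`. Fix a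
representative `e_s` with `‖e_s‖_A = s` and, for each such `u`, an isometry `φs u` with
`φs u • e_{‖u‖_A} = u`. Then `x = φs u • (‖x‖_A • e_{sign ‖x‖_A})`, and equivariance gives
`f x = ρ (φs u) • φn ‖x‖_A` with `φn r = f (r • e_{sign r})`.
-/

namespace Matrix

variable {ι K : Type*} [Fintype ι]

section CommRing

variable [CommRing K]

theorem dotProduct_mulVec_comm {A : Matrix ι ι K} (hA : A.IsSymm) (x y : ι → K) :
    x ⬝ᵥ A *ᵥ y = y ⬝ᵥ A *ᵥ x := by
  rw [dotProduct_mulVec, ← mulVec_transpose, hA.eq, dotProduct_comm]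

theorem smul_dotProduct_mulVec_smul (A : Matrix ι ι K) (c : K) (x : ι → K) :
    c • x ⬝ᵥ A *ᵥ (c • x) = c ^ 2 * (x ⬝ᵥ A *ᵥ x) := by
  rw [mulVec_smul, smul_dotProduct, dotProduct_smul, smul_smul, smul_eq_mul, sq]

variable [DecidableEq ι]

def isometrySubmonoid (A : Matrix ι ι K) : Submonoid (Matrix ι ι K) where
  carrier := {g | IsUnit g ∧ gᵀ * A * g = A}
  one_mem' := ⟨isUnit_one, by simp⟩
  mul_mem' := by
    rintro g h ⟨hg, hgA⟩ ⟨hh, hhA⟩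
    refine ⟨hg.mul hh, ?_⟩
    calc (g * h)ᵀ * A * (g * h) = hᵀ * (gᵀ * A * g) * h := by
          simp only [transpose_mul, Matrix.mul_assoc]
      _ = A := by rw [hgA, hhA]

theorem mem_isometrySubmonoid {A g : Matrix ι ι K} :
    g ∈ isometrySubmonoid A ↔ IsUnit g ∧ gᵀ * A * g = A :=
  Iff.rfl

theorem transpose_mul_mul_eq_iff {A g : Matrix ι ι K} :
    gᵀ * A * g = A ↔ ∀ x y, g *ᵥ x ⬝ᵥ A *ᵥ (g *ᵥ y) = x ⬝ᵥ A *ᵥ y := by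
  have key : ∀ x y, x ⬝ᵥ (gᵀ * A * g) *ᵥ y = g *ᵥ x ⬝ᵥ A *ᵥ (g *ᵥ y) := fun x y => by
    rw [← mulVec_mulVec, ← mulVec_mulVec, dotProduct_mulVec, vecMul_transpose]
  refine ⟨fun h x y => by rw [← key, h], fun h => ?_⟩
  ext i j
  have hij := h (Pi.single i 1) (Pi.single j 1)
  rw [← key] at hij
  simpa using hij

end CommRing

variable [DecidableEq ι] [Field K]

def reflection (A : Matrix ι ι K) (w : ι → K) : Matrix ι ι K :=
  1 - (2 / (w ⬝ᵥ A *ᵥ w)) • vecMulVec w (A *ᵥ w)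

variable {A : Matrix ι ι K} {w : ι → K}

theorem reflection_mulVec (x : ι → K) :
    reflection A w *ᵥ x = x - (2 / (w ⬝ᵥ A *ᵥ w) * (A *ᵥ w ⬝ᵥ x)) • w := by
  rw [reflection, sub_mulVec, one_mulVec, smul_mulVec, vecMulVec_mulVec, op_smul_eq_smul,
    smul_smul]

theorem reflection_mul_self (hw : w ⬝ᵥ A *ᵥ w ≠ 0) : reflection A w * reflection A w = 1 := by
  refine ext_iff_mulVec.2 fun x => ?_
  have hc : 2 / (w ⬝ᵥ A *ᵥ w) * (A *ᵥ w ⬝ᵥ reflection A w *ᵥ x)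
      = -(2 / (w ⬝ᵥ A *ᵥ w) * (A *ᵥ w ⬝ᵥ x)) := by
    rw [reflection_mulVec, dotProduct_sub, dotProduct_smul, dotProduct_comm (A *ᵥ w) w,
      smul_eq_mul]
    field_simp
    ring
  rw [← mulVec_mulVec, one_mulVec, reflection_mulVec (reflection A w *ᵥ x), hc,
    reflection_mulVec]
  module

theorem reflection_dotProduct_mulVec (hA : A.IsSymm) (hw : w ⬝ᵥ A *ᵥ w ≠ 0) (x y : ι → K) :
    reflection A w *ᵥ x ⬝ᵥ A *ᵥ (reflection A w *ᵥ y) = x ⬝ᵥ A *ᵥ y := by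
  simp only [reflection_mulVec, mulVec_sub, mulVec_smul, dotProduct_sub, sub_dotProduct,
    dotProduct_smul, smul_dotProduct, smul_eq_mul, dotProduct_comm (A *ᵥ w)]
  rw [dotProduct_mulVec_comm hA y w]
  field_simp
  ring

theorem reflection_mem_isometrySubmonoid (hA : A.IsSymm) (hw : w ⬝ᵥ A *ᵥ w ≠ 0) :
    reflection A w ∈ isometrySubmonoid A :=
  mem_isometrySubmonoid.2 ⟨.of_mul_eq_one _ (reflection_mul_self hw),
    transpose_mul_mul_eq_iff.2 (reflection_dotProduct_mulVec hA hw)⟩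

theorem reflection_sub_mulVec (hA : A.IsSymm) {u v : ι → K}
    (huv : u ⬝ᵥ A *ᵥ u = v ⬝ᵥ A *ᵥ v) (h : (u - v) ⬝ᵥ A *ᵥ (u - v) ≠ 0) :
    reflection A (u - v) *ᵥ v = u := by
  have hq : (u - v) ⬝ᵥ A *ᵥ (u - v) = 2 * (v ⬝ᵥ A *ᵥ v - u ⬝ᵥ A *ᵥ v) := by
    simp only [mulVec_sub, dotProduct_sub, sub_dotProduct, dotProduct_mulVec_comm hA v u, huv]
    ring
  have hc : 2 / ((u - v) ⬝ᵥ A *ᵥ (u - v)) * (A *ᵥ (u - v) ⬝ᵥ v) = -1 := by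
    rw [hq] at h ⊢
    have h2 : (2 : K) ≠ 0 := left_ne_zero_of_mul h
    have hd := right_ne_zero_of_mul h
    rw [dotProduct_comm (A *ᵥ (u - v)), mulVec_sub, dotProduct_sub, dotProduct_mulVec_comm hA v u]
    field_simp
    ring
  rw [reflection_mulVec, hc]
  module

theorem exists_mem_isometrySubmonoid_mulVec_eq [NeZero (2 : K)] (hA : A.IsSymm) {u v : ι → K}
    (huv : u ⬝ᵥ A *ᵥ u = v ⬝ᵥ A *ᵥ v) (hu : u ⬝ᵥ A *ᵥ u ≠ 0) :
    ∃ g ∈ isometrySubmonoid A, g *ᵥ v = u := by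
  by_cases h : (u - v) ⬝ᵥ A *ᵥ (u - v) = 0
  · have hneg : -u ⬝ᵥ A *ᵥ -u = v ⬝ᵥ A *ᵥ v := by
      rw [mulVec_neg, neg_dotProduct, dotProduct_neg, neg_neg, huv]
    have hpar : (u - v) ⬝ᵥ A *ᵥ (u - v) + (-u - v) ⬝ᵥ A *ᵥ (-u - v)
        = 2 * (2 * (u ⬝ᵥ A *ᵥ u)) := by
      simp only [mulVec_sub, mulVec_neg, dotProduct_sub, sub_dotProduct, dotProduct_neg,
        neg_dotProduct, ← huv]
      ring
    have h₁ : (-u - v) ⬝ᵥ A *ᵥ (-u - v) ≠ 0 := by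
      rw [h, zero_add] at hpar
      rw [hpar]
      exact mul_ne_zero two_ne_zero (mul_ne_zero two_ne_zero hu)
    have h₂ : (u - -u) ⬝ᵥ A *ᵥ (u - -u) ≠ 0 := by
      rw [sub_neg_eq_add, ← two_smul K u, smul_dotProduct_mulVec_smul]
      exact mul_ne_zero (pow_ne_zero _ two_ne_zero) hu
    refine ⟨reflection A (u - -u) * reflection A (-u - v),
      mul_mem (reflection_mem_isometrySubmonoid hA h₂) (reflection_mem_isometrySubmonoid hA h₁),
      ?_⟩
    rw [← mulVec_mulVec, reflection_sub_mulVec hA hneg h₁,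
      reflection_sub_mulVec hA (hneg.trans huv.symm).symm h₂]
  · exact ⟨_, reflection_mem_isometrySubmonoid hA h, reflection_sub_mulVec hA huv h⟩

end Matrix

section normA

variable {n : ℕ} {A : Matrix (Fin n) (Fin n) ℝ} {x : Fin n → ℝ}

theorem sign_mul_sqrt_abs_injective : Function.Injective fun t : ℝ => Real.sign t * √|t| := by
  refine Function.LeftInverse.injective (g := fun s => Real.sign s * s ^ 2) fun t => ?_
  rcases lt_trichotomy t 0 with ht | rfl | ht
  · have hs : 0 < √(-t) := Real.sqrt_pos.2 (neg_pos.2 ht)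
    simp [Real.sign_of_neg ht, abs_of_neg ht, Real.sign_neg, Real.sign_of_pos hs,
      Real.sq_sqrt (neg_nonneg.2 ht.le)]
  · simp [Real.sign_zero]
  · have hs : 0 < √t := Real.sqrt_pos.2 ht
    simp [Real.sign_of_pos ht, abs_of_pos ht, Real.sign_of_pos hs, Real.sq_sqrt ht.le]

theorem sign_mul_sqrt_abs_sq_mul (c t : ℝ) :
    Real.sign (c ^ 2 * t) * √|c ^ 2 * t| = |c| * (Real.sign t * √|t|) := by
  rcases eq_or_ne c 0 with rfl | hc
  · simp [Real.sign_zero]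
  have hc2 : 0 < c ^ 2 := by positivity
  have hsign : Real.sign (c ^ 2 * t) = Real.sign t := by
    rcases lt_trichotomy t 0 with ht | rfl | ht
    · rw [Real.sign_of_neg (mul_neg_of_pos_of_neg hc2 ht), Real.sign_of_neg ht]
    · simp
    · rw [Real.sign_of_pos (mul_pos hc2 ht), Real.sign_of_pos ht]
  rw [hsign, abs_mul, abs_of_pos hc2, Real.sqrt_mul hc2.le, Real.sqrt_sq_eq_abs]
  ring

theorem dotProduct_mulVec_eq_of_normA_eq {y : Fin n → ℝ} (h : normA A x = normA A y) :
    x ⬝ᵥ A *ᵥ x = y ⬝ᵥ A *ᵥ y :=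
  sign_mul_sqrt_abs_injective h

theorem normA_eq_zero_iff : normA A x = 0 ↔ x ⬝ᵥ A *ᵥ x = 0 :=
  sign_mul_sqrt_abs_injective.eq_iff' (by simp [Real.sign_zero])

theorem normA_smul (c : ℝ) : normA A (c • x) = |c| * normA A x := by
  rw [normA, normA, smul_dotProduct_mulVec_smul]
  exact sign_mul_sqrt_abs_sq_mul c _

theorem normA_inv_normA_smul (hx : normA A x ≠ 0) :
    normA A ((normA A x)⁻¹ • x) = Real.sign (normA A x) := by
  rw [normA_smul]
  rcases hx.lt_or_gt with h | h
  · rw [Real.sign_of_neg h, abs_inv, abs_of_neg h]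
    field_simp
  · rw [Real.sign_of_pos h, abs_inv, abs_of_pos h]
    field_simp

end normA

noncomputable def normARep {n : ℕ} (A : Matrix (Fin n) (Fin n) ℝ) (s : ℝ) : Fin n → ℝ :=
  Classical.epsilon fun y => normA A y = s

noncomputable def orbitIsometry {n : ℕ} (A : Matrix (Fin n) (Fin n) ℝ) (u : Fin n → ℝ) :
    Matrix (Fin n) (Fin n) ℝ :=
  (Classical.epsilon fun g : isometrySubmonoid A =>
    (g : Matrix _ _ ℝ) *ᵥ normARep A (normA A u) = u : isometrySubmonoid A)

section orbitIsometry

variable {n : ℕ} {A : Matrix (Fin n) (Fin n) ℝ} {u : Fin n → ℝ}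

theorem normA_normARep_normA (A : Matrix (Fin n) (Fin n) ℝ) (u : Fin n → ℝ) :
    normA A (normARep A (normA A u)) = normA A u :=
  Classical.epsilon_spec (p := fun y => normA A y = normA A u) ⟨u, rfl⟩

theorem orbitIsometry_mem : orbitIsometry A u ∈ isometrySubmonoid A :=
  Subtype.property _

theorem orbitIsometry_mulVec_normARep (hA : A.IsSymm) (hu : u ⬝ᵥ A *ᵥ u ≠ 0) :
    orbitIsometry A u *ᵥ normARep A (normA A u) = u := by
  have hq := dotProduct_mulVec_eq_of_normA_eq (normA_normARep_normA A u)
  obtain ⟨g, hg, hgu⟩ := exists_mem_isometrySubmonoid_mulVec_eq hA hq.symm hu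
  exact Classical.epsilon_spec
    (p := fun g : isometrySubmonoid A => (g : Matrix _ _ ℝ) *ᵥ normARep A (normA A u) = u)
    ⟨⟨g, hg⟩, hgu⟩

end orbitIsometry

theorem equivariant_decomposition_general (n m : ℕ)
    (A : Matrix (Fin n) (Fin n) ℝ) (hA : A.IsSymm)
    (ρ : Matrix (Fin n) (Fin n) ℝ → Matrix (Fin m) (Fin m) ℝ)
    (f : (Fin n → ℝ) → (Fin m → ℝ))
    (hf : ∀ (g : Matrix (Fin n) (Fin n) ℝ) (x : Fin n → ℝ),
      IsUnit g → gᵀ * A * g = A → x ⬝ᵥ A.mulVec x ≠ 0 →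
      f (g.mulVec x) = (ρ g).mulVec (f x)) :
    ∃ (φs : (Fin n → ℝ) → Matrix (Fin n) (Fin n) ℝ) (φn : ℝ → (Fin m → ℝ)),
      (∀ u : Fin n → ℝ, IsUnit (φs u) ∧ (φs u)ᵀ * A * (φs u) = A) ∧
      (∀ x : Fin n → ℝ, x ⬝ᵥ A.mulVec x ≠ 0 →
        f x = (ρ (φs ((normA A x)⁻¹ • x))).mulVec (φn (normA A x))) := by
  refine ⟨orbitIsometry A, fun r => f (r • normARep A (Real.sign r)),
    fun _ => mem_isometrySubmonoid.1 orbitIsometry_mem, fun x hx => ?_⟩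
  set r := normA A x
  set u := r⁻¹ • x
  set y := r • normARep A (Real.sign r) with hy
  have hr : r ≠ 0 := normA_eq_zero_iff.not.2 hx
  have hqu : u ⬝ᵥ A *ᵥ u ≠ 0 := by
    rw [smul_dotProduct_mulVec_smul]
    exact mul_ne_zero (pow_ne_zero 2 (inv_ne_zero hr)) hx
  have hgx : orbitIsometry A u *ᵥ y = x := by
    rw [hy, mulVec_smul, ← normA_inv_normA_smul hr, orbitIsometry_mulVec_normARep hA hqu, smul_smul,
      mul_inv_cancel₀ hr, one_smul]
  obtain ⟨hunit, hform⟩ := mem_isometrySubmonoid.1 (orbitIsometry_mem (A := A) (u := u))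
  have hq : y ⬝ᵥ A *ᵥ y ≠ 0 := by
    rwa [← transpose_mul_mul_eq_iff.1 hform, hgx]
  conv_lhs => rw [← hgx]
  exact hf _ _ hunit hform hq

theorem equivariant_decomposition (n m : ℕ)
    (A : Matrix (Fin n) (Fin n) ℝ) (hA0 : A ≠ 0) (hA : A.IsSymm)
    (ρ : Matrix (Fin n) (Fin n) ℝ → Matrix (Fin m) (Fin m) ℝ)
    (hρ1 : ρ 1 = 1)
    (hρmul : ∀ g h : Matrix (Fin n) (Fin n) ℝ,
      (IsUnit g ∧ gᵀ * A * g = A) → (IsUnit h ∧ hᵀ * A * h = A) →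
      ρ (g * h) = ρ g * ρ h)
    (f : (Fin n → ℝ) → (Fin m → ℝ))
    (hf : ∀ (g : Matrix (Fin n) (Fin n) ℝ) (x : Fin n → ℝ),
      IsUnit g → gᵀ * A * g = A → x ⬝ᵥ A.mulVec x ≠ 0 →
      f (g.mulVec x) = (ρ g).mulVec (f x)) :
    ∃ (φs : (Fin n → ℝ) → Matrix (Fin n) (Fin n) ℝ) (φn : ℝ → (Fin m → ℝ)),
      (∀ u : Fin n → ℝ, IsUnit (φs u) ∧ (φs u)ᵀ * A * (φs u) = A) ∧
      (∀ x : Fin n → ℝ, x ⬝ᵥ A.mulVec x ≠ 0 →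
        f x = (ρ (φs ((normA A x)⁻¹ • x))).mulVec (φn (normA A x))) :=
  equivariant_decomposition_general n m A hA ρ f hf
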